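/- Multiset reformulation of q-factorization existence: let q ∈ ℂ× not be a root of unity and let S be a finite multiset of elements of ℂ×. Then S can be partitioned into q-strings Σ(a,r) = {aq^{r−1}, aq^{r−3}, …, aq^{1−r}} (a ∈ ℂ×, r ≥ 1) such that for any two strings Σ(a,r), Σ(b,s) in the partition, a/b ≠ q^{±(r+s−2p)} for all 0 ≤ p < min{r,s}. -/

import Mathlib

/-- The q-string of length `r` centered at `a`: the multiset
`{aq^{r−1}, aq^{r−3}, …, aq^{1−r}}`. -/
noncomputable def qstring (q a : ℂˣ) (r : ℕ) : Multiset ℂˣ :=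
  (Multiset.range r).map fun l => a * q ^ ((r : ℤ) - 1 - 2 * (l : ℤ))

/-- The non-resonance condition between two q-strings `(a,r)` and `(b,s)`:
`a/b ≠ q^{±(r+s−2p)}` for all `0 ≤ p < min{r,s}`. -/
def nonres (q : ℂˣ) (x y : ℂˣ × ℕ) : Prop :=
  ∀ p : ℕ, p < min x.2 y.2 →
    x.1 / y.1 ≠ q ^ ((x.2 : ℤ) + (y.2 : ℤ) - 2 * (p : ℤ)) ∧
    x.1 / y.1 ≠ (q ^ ((x.2 : ℤ) + (y.2 : ℤ) - 2 * (p : ℤ)))⁻¹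

/-!
Induct on `S`. A `q`-string contained in `S` has length at most `card S`, so `S ≠ 0` contains a
longest one, `Σ(c,r)`. As `q` has infinite order, `c q^{±(r+1)} ∉ Σ(c,r)`, so
`Σ(c q^{±1}, r+1) = Σ(c,r) + {c q^{±(r+1)}}` and maximality gives `c q^{±(r+1)} ∉ S`. Remove `Σ(c,r)` and
partition the rest. Every other string `Σ(b,s)` of the partition lies in `S`, and a resonance
`c/b = q^{∓(r+s-2p)}` would put `c q^{±(r+1)}` into `Σ(b,s)`.
-/

theorem nonres.symm {q : ℂˣ} {x y : ℂˣ × ℕ} (h : nonres q x y) : nonres q y x := by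
  intro p hp
  obtain ⟨h₁, h₂⟩ := h p (by omega)
  rw [← inv_div, add_comm (y.2 : ℤ)]
  exact ⟨fun e => h₂ (by rw [← e, inv_inv]), fun e => h₁ (inv_injective e)⟩

-- In `qstring`, `(l : ℤ)` coerces the multiset `Multiset.range r` itself (through `bind`).
theorem qstring_eq_map (q a : ℂˣ) (r : ℕ) :
    qstring q a r = (Multiset.range r).map fun l : ℕ => a * q ^ ((r : ℤ) - 1 - 2 * (l : ℤ)) := by
  have hcast : (do let l ← Multiset.range r; pure (l : ℤ)) = (Multiset.range r).map Nat.cast :=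
    Multiset.bind_singleton _ _
  rw [qstring, hcast, Multiset.map_map]
  rfl

theorem mem_qstring {q a x : ℂˣ} {r : ℕ} :
    x ∈ qstring q a r ↔ ∃ l < r, a * q ^ ((r : ℤ) - 1 - 2 * (l : ℤ)) = x := by
  simp [qstring_eq_map]

theorem card_qstring (q a : ℂˣ) (r : ℕ) : (qstring q a r).card = r := by
  simp [qstring_eq_map]

theorem qstring_mul_succ (q c : ℂˣ) (r : ℕ) :
    qstring q (c * q) (r + 1) = c * q ^ ((r : ℤ) + 1) ::ₘ qstring q c r := by
  rw [qstring_eq_map, add_comm r, Multiset.range_add, Multiset.map_add, Multiset.map_map]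
  rw [show Multiset.range 1 = {0} from rfl, Multiset.map_singleton, Multiset.singleton_add,
    qstring_eq_map]
  congr 1
  · rw [mul_assoc, ← zpow_one_add]; congr 2; push_cast; ring
  · refine Multiset.map_congr rfl fun l _ => ?_
    rw [Function.comp_apply, mul_assoc, ← zpow_one_add]; congr 2; push_cast; ring

theorem qstring_mul_inv_succ (q c : ℂˣ) (r : ℕ) :
    qstring q (c * q⁻¹) (r + 1) = c * q ^ (-(r : ℤ) - 1) ::ₘ qstring q c r := by
  rw [qstring_eq_map, Multiset.range_succ, Multiset.map_cons, qstring_eq_map]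
  congr 1
  · rw [mul_assoc, ← zpow_neg_one, ← zpow_add]; congr 2; push_cast; ring
  · refine Multiset.map_congr rfl fun l _ => ?_
    rw [mul_assoc, ← zpow_neg_one, ← zpow_add]; congr 2; push_cast; ring

section

variable {q : ℂˣ} (hq : ¬IsOfFinOrder q)
include hq

theorem mul_zpow_succ_notMem_qstring (c : ℂˣ) (r : ℕ) :
    c * q ^ ((r : ℤ) + 1) ∉ qstring q c r := by
  rw [mem_qstring]
  rintro ⟨l, -, hl⟩
  have := injective_zpow_iff_not_isOfFinOrder.mpr hq (mul_left_cancel hl)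
  omega

theorem mul_zpow_neg_succ_notMem_qstring (c : ℂˣ) (r : ℕ) :
    c * q ^ (-(r : ℤ) - 1) ∉ qstring q c r := by
  rw [mem_qstring]
  rintro ⟨l, hl, h⟩
  have := injective_zpow_iff_not_isOfFinOrder.mpr hq (mul_left_cancel h)
  omega

end

theorem nonres_of_notMem_qstring {q c b : ℂˣ} {r s : ℕ}
    (htop : c * q ^ ((r : ℤ) + 1) ∉ qstring q b s)
    (hbot : c * q ^ (-(r : ℤ) - 1) ∉ qstring q b s) :
    nonres q (c, r) (b, s) := by
  intro p hp
  simp only [lt_min_iff] at hp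
  constructor
  · intro h
    refine hbot (mem_qstring.mpr ⟨p, hp.2, ?_⟩)
    rw [div_eq_iff_eq_mul] at h
    dsimp only at h
    rw [h, mul_comm _ b, mul_assoc, ← zpow_add]; congr 2; ring
  · intro h
    refine htop (mem_qstring.mpr ⟨s - 1 - p, by omega, ?_⟩)
    rw [div_eq_iff_eq_mul] at h
    dsimp only at h
    have hcast : ((s - 1 - p : ℕ) : ℤ) = s - 1 - p := by omega
    rw [h, mul_comm _ b, mul_assoc, ← zpow_neg, ← zpow_add, hcast]; congr 2; ring

theorem exists_maximal_qstring_le {q : ℂˣ} (hq : ¬IsOfFinOrder q) {S : Multiset ℂˣ} (hS : S ≠ 0) :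
    ∃ c r, 0 < r ∧ qstring q c r ≤ S ∧
      c * q ^ ((r : ℤ) + 1) ∉ S ∧ c * q ^ (-(r : ℤ) - 1) ∉ S := by
  classical
  obtain ⟨a, ha⟩ := Multiset.exists_mem_of_ne_zero hS
  let P : ℕ → Prop := fun r => ∃ c, qstring q c r ≤ S
  have hbound : ∀ r, P r → r ≤ S.card := fun r ⟨c, hc⟩ =>
    card_qstring q c r ▸ Multiset.card_le_card hc
  have hP₁ : P 1 := ⟨a, by simpa [qstring_eq_map] using ha⟩
  set r := Nat.findGreatest P S.card
  obtain ⟨c, hc⟩ : P r := Nat.findGreatest_spec (hbound 1 hP₁) hP₁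
  have hsucc : ¬P (r + 1) := fun h => Nat.findGreatest_is_greatest r.lt_succ_self (hbound _ h) h
  refine ⟨c, r, Nat.le_findGreatest (hbound 1 hP₁) hP₁, hc, fun htop => hsucc ⟨c * q, ?_⟩,
    fun hbot => hsucc ⟨c * q⁻¹, ?_⟩⟩
  · rw [qstring_mul_succ, Multiset.cons_le_of_notMem (mul_zpow_succ_notMem_qstring hq c r)]
    exact ⟨htop, hc⟩
  · rw [qstring_mul_inv_succ, Multiset.cons_le_of_notMem (mul_zpow_neg_succ_notMem_qstring hq c r)]
    exact ⟨hbot, hc⟩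

theorem exists_pairwise_nonres_qstring_decomposition {q : ℂˣ} (hq : ¬IsOfFinOrder q)
    (S : Multiset ℂˣ) :
    ∃ L : List (ℂˣ × ℕ), (∀ x ∈ L, 1 ≤ x.2) ∧
      (L.map fun x => qstring q x.1 x.2).sum = S ∧ L.Pairwise (nonres q) := by
  induction S using Multiset.strongInductionOn with
  | ih S ih =>
  rcases eq_or_ne S 0 with rfl | hS
  · exact ⟨[], by simp, by simp, List.Pairwise.nil⟩
  obtain ⟨c, r, hr, hcS, htop, hbot⟩ := exists_maximal_qstring_le hq hS
  have hlt : S - qstring q c r < S := calc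
    S - qstring q c r < qstring q c r + (S - qstring q c r) :=
      lt_add_of_pos_left _ <| pos_iff_ne_zero.mpr <| Multiset.card_pos.mp <| by rwa [card_qstring]
    _ = S := add_tsub_cancel_of_le hcS
  obtain ⟨L, hpos, hsum, hpair⟩ := ih _ hlt
  refine ⟨(c, r) :: L, List.forall_mem_cons.mpr ⟨hr, hpos⟩, ?_, ?_⟩
  · rw [List.map_cons, List.sum_cons, hsum, add_tsub_cancel_of_le hcS]
  refine List.pairwise_cons.mpr ⟨fun x hx => ?_, hpair⟩
  have hxS : qstring q x.1 x.2 ≤ S := calc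
    _ ≤ S - qstring q c r := hsum ▸ List.le_sum_of_mem (List.mem_map_of_mem hx)
    _ ≤ S := tsub_le_self
  exact nonres_of_notMem_qstring (mt (Multiset.mem_of_le hxS) htop)
    (mt (Multiset.mem_of_le hxS) hbot)

/-- Multiset reformulation of q-factorization existence: every finite multiset `S` of
elements of `ℂˣ` can be partitioned into q-strings so that any two strings of the
partition are non-resonant. -/
theorem stmt_18 (q : ℂˣ) (hq : ∀ k : ℕ, 1 ≤ k → q ^ k ≠ 1) (S : Multiset ℂˣ) :
    ∃ L : List (ℂˣ × ℕ), (∀ x ∈ L, 1 ≤ x.2) ∧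
      (L.map fun x => qstring q x.1 x.2).sum = S ∧
      ∀ i j : Fin L.length, i ≠ j → nonres q (L.get i) (L.get j) := by
  have hq' : ¬IsOfFinOrder q := fun h =>
    let ⟨k, hk, hqk⟩ := isOfFinOrder_iff_pow_eq_one.mp h
    hq k hk hqk
  obtain ⟨L, hpos, hsum, hpair⟩ := exists_pairwise_nonres_qstring_decomposition hq' S
  refine ⟨L, hpos, hsum, fun i j hij => ?_⟩
  rcases hij.lt_or_gt with h | h
  · exact hpair.rel_get_of_lt h
  · exact (hpair.rel_get_of_lt h).symm
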